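/- A set of quantum states {ρ_k} on a finite-dimensional Hilbert space can be perfectly broadcast by a single quantum channel (there exists a channel Λ : B(H) → B(H ⊗ H) with Tr_2 Λ(ρ_k) = ρ_k and Tr_1 Λ(ρ_k) = ρ_k for all k) if the states pairwise commute: [ρ_i, ρ_j] = 0 for all i, j. -/

import Mathlib

open Matrix Finset ComplexOrder

/-- The Choi matrix of a superoperator `Λ : B(H) → B(H ⊗ H)`. -/
noncomputable def choiMatrix {n : ℕ}
    (Λ : Matrix (Fin n) (Fin n) ℂ →ₗ[ℂ] Matrix (Fin n × Fin n) (Fin n × Fin n) ℂ) :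
    Matrix ((Fin n × Fin n) × Fin n) ((Fin n × Fin n) × Fin n) ℂ :=
  Matrix.of fun p q => Λ (Matrix.single p.2 q.2 1) p.1 q.1

/-!
Commuting Hermitian matrices are diagonalised by a single unitary `U`. Measuring in the basis of
columns `uₐ` of `U` and preparing two copies of the outcome,
`X ↦ ∑ₐ ⟨uₐ, X uₐ⟩ |uₐ⟩⟨uₐ| ⊗ |uₐ⟩⟨uₐ|`, is completely positive because its Choi matrix is a
Gram matrix, and both of its marginals are the dephasing `X ↦ ∑ₐ ⟨uₐ, X uₐ⟩ |uₐ⟩⟨uₐ|`, which is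
trace preserving and fixes every matrix that is diagonal in the basis `(uₐ)`.
-/

open scoped Kronecker

open Module.End in
theorem LinearMap.IsSymmetric.exists_orthonormalBasis_forall_eigenvector_of_commute
    {𝕜 E ι : Type*} [RCLike 𝕜] [NormedAddCommGroup E] [InnerProductSpace 𝕜 E]
    [FiniteDimensional 𝕜 E] {T : ι → Module.End 𝕜 E}
    (hT : ∀ i, (T i).IsSymmetric) (h : Pairwise (Function.onFun Commute T)) :
    ∃ b : OrthonormalBasis (Fin (Module.finrank 𝕜 E)) 𝕜 E,
      ∀ i a, ∃ μ : 𝕜, T i (b a) = μ • b a := by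
  classical
  let V : (ι → 𝕜) → Submodule 𝕜 E := fun χ => ⨅ i, eigenspace (T i) (χ i)
  have hV : DirectSum.IsInternal V := directSum_isInternal_of_pairwise_commute hT h
  -- independence leaves only finitely many nonzero joint eigenspaces to collect bases from
  let _ := hV.submodule_iSupIndep.fintypeNeBotOfFiniteDimensional
  have horth := (orthogonalFamily_iInf_eigenspaces hT).comp
    (Subtype.val_injective (p := fun χ => V χ ≠ ⊥))
  have hV' := DirectSum.isInternal_ne_bot_iff.mpr hV
  refine ⟨hV'.subordinateOrthonormalBasis rfl horth, fun i a =>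
    ⟨(hV'.subordinateOrthonormalBasisIndex rfl a horth).1 i, ?_⟩⟩
  exact mem_eigenspace_iff.mp <|
    Submodule.mem_iInf _ |>.mp (hV'.subordinateOrthonormalBasis_subordinate rfl a horth) i

namespace Matrix

theorem exists_unitary_forall_eq_diagonal_of_commute {𝕜 n ι : Type*} [RCLike 𝕜]
    [Fintype n] [DecidableEq n] {A : ι → Matrix n n 𝕜} (hA : ∀ i, (A i).IsHermitian)
    (h : ∀ i j, Commute (A i) (A j)) :
    ∃ U ∈ unitaryGroup n 𝕜, ∀ i, ∃ d : n → 𝕜, A i = U * diagonal d * Uᴴ := by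
  obtain ⟨b, hb⟩ :=
    LinearMap.IsSymmetric.exists_orthonormalBasis_forall_eigenvector_of_commute
      (T := fun i => toEuclideanLin (A i)) (fun i => isSymmetric_toEuclideanLin_iff.mpr (hA i))
      fun i j _ => (h i j).map (toLpLinAlgEquiv 2)
  choose μ hμ using hb
  let e : Fin (Module.finrank 𝕜 (EuclideanSpace 𝕜 n)) ≃ n := Fintype.equivOfCardEq (by simp)
  let b' := b.reindex e
  let U := (EuclideanSpace.basisFun n 𝕜).toBasis.toMatrix b'.toBasis
  have hU : U ∈ unitaryGroup n 𝕜 :=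
    (EuclideanSpace.basisFun n 𝕜).toMatrix_orthonormalBasis_mem_unitary b'
  refine ⟨U, hU, fun i => ⟨μ i ∘ e.symm, ?_⟩⟩
  have hAU : A i * U = U * diagonal (μ i ∘ e.symm) := by
    ext j m
    have hcol := congrArg (fun v => v j) (hμ i (e.symm m))
    simp only [toLpLin_apply, PiLp.toLp_apply, PiLp.smul_apply, mulVec, dotProduct,
      smul_eq_mul] at hcol
    rw [mul_diagonal]
    simpa [U, b', mul_apply, Module.Basis.toMatrix_apply, mul_comm] using hcol
  have hUU : U * Uᴴ = 1 := Unitary.mul_star_self_of_mem hU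
  calc A i = A i * U * Uᴴ := by rw [mul_assoc, hUU, mul_one]
    _ = U * diagonal (μ i ∘ e.symm) * Uᴴ := by rw [hAU]

section PartialTrace

variable {R m n : Type*}

-- `partialTrace₂` traces out the second tensor factor, `partialTrace₁` the first.
def partialTrace₂ [Semiring R] [Fintype n] : Matrix (m × n) (m × n) R →ₗ[R] Matrix m m R where
  toFun M := of fun i j => ∑ b, M (i, b) (j, b)
  map_add' M N := by ext; simp [sum_add_distrib]
  map_smul' c M := by ext; simp [mul_sum]

def partialTrace₁ [Semiring R] [Fintype m] : Matrix (m × n) (m × n) R →ₗ[R] Matrix n n R where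
  toFun M := of fun i j => ∑ a, M (a, i) (a, j)
  map_add' M N := by ext; simp [sum_add_distrib]
  map_smul' c M := by ext; simp [mul_sum]

theorem trace_partialTrace₂ [Semiring R] [Fintype m] [Fintype n]
    (M : Matrix (m × n) (m × n) R) : (partialTrace₂ M).trace = M.trace := by
  simp [partialTrace₂, trace, Fintype.sum_prod_type]

theorem partialTrace₂_kronecker [CommSemiring R] [Fintype n] (A : Matrix m m R)
    (B : Matrix n n R) : partialTrace₂ (A ⊗ₖ B) = B.trace • A := by
  ext; simp [partialTrace₂, trace, mul_sum, mul_comm]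

theorem partialTrace₁_kronecker [CommSemiring R] [Fintype m] (A : Matrix m m R)
    (B : Matrix n n R) : partialTrace₁ (A ⊗ₖ B) = A.trace • B := by
  ext; simp [partialTrace₁, trace, sum_mul]

end PartialTrace

theorem mul_single_one_mul_apply {R l m n o : Type*} [CommSemiring R] [Fintype m] [Fintype n]
    [DecidableEq m] [DecidableEq n] (A : Matrix l m R) (B : Matrix n o R) (i : m) (j : n)
    (k : l) (k' : o) : (A * single i j (1 : R) * B) k k' = A k i * B j k' := by
  simp [mul_apply, single, ite_and]

theorem sum_smul_mul_single_mul {R n : Type*} [CommSemiring R] [Fintype n] [DecidableEq n]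
    (U V : Matrix n n R) (d : n → R) :
    ∑ a, d a • (U * single a a 1 * V) = U * diagonal d * V := by
  ext i j
  rw [mul_apply]
  simp only [sum_apply, smul_apply, mul_single_one_mul_apply, smul_eq_mul, mul_diagonal]
  exact sum_congr rfl fun a _ => by ring

section MeasurePrepare

variable {R n : Type*} [CommRing R] [StarRing R] [Fintype n] [DecidableEq n]

def measurePrepare (U : Matrix n n R) : Matrix n n R →ₗ[R] Matrix (n × n) (n × n) R where
  toFun X := ∑ a, (Uᴴ * X * U) a a • ((U * single a a 1 * Uᴴ) ⊗ₖ (U * single a a 1 * Uᴴ))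
  map_add' X Y := by simp [Matrix.mul_add, Matrix.add_mul, add_smul, sum_add_distrib]
  map_smul' c X := by simp [smul_sum, smul_smul]

theorem measurePrepare_apply (U X : Matrix n n R) :
    measurePrepare U X =
      ∑ a, (Uᴴ * X * U) a a • ((U * single a a 1 * Uᴴ) ⊗ₖ (U * single a a 1 * Uᴴ)) := rfl

def dephase (U X : Matrix n n R) : Matrix n n R := U * diagonal (Uᴴ * X * U).diag * Uᴴ

variable {U : Matrix n n R}

theorem trace_mul_single_one_mul_conjTranspose (hU : U ∈ unitaryGroup n R) (a : n) :
    (U * single a a 1 * Uᴴ).trace = 1 := by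
  have hUU : Uᴴ * U = 1 := Unitary.star_mul_self_of_mem hU
  rw [trace_mul_cycle, hUU, one_mul, trace_single_eq_same]

theorem partialTrace₂_measurePrepare (hU : U ∈ unitaryGroup n R) (X : Matrix n n R) :
    partialTrace₂ (measurePrepare U X) = dephase U X := by
  simp only [measurePrepare_apply, map_sum, map_smul, partialTrace₂_kronecker,
    trace_mul_single_one_mul_conjTranspose hU, one_smul, sum_smul_mul_single_mul]
  rfl

theorem partialTrace₁_measurePrepare (hU : U ∈ unitaryGroup n R) (X : Matrix n n R) :
    partialTrace₁ (measurePrepare U X) = dephase U X := by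
  simp only [measurePrepare_apply, map_sum, map_smul, partialTrace₁_kronecker,
    trace_mul_single_one_mul_conjTranspose hU, one_smul, sum_smul_mul_single_mul]
  rfl

theorem trace_dephase (hU : U ∈ unitaryGroup n R) (X : Matrix n n R) :
    (dephase U X).trace = X.trace := by
  have hUU : Uᴴ * U = 1 := Unitary.star_mul_self_of_mem hU
  have hUU' : U * Uᴴ = 1 := Unitary.mul_star_self_of_mem hU
  calc (dephase U X).trace = (diagonal (Uᴴ * X * U).diag).trace := by
        rw [dephase, trace_mul_cycle, hUU, one_mul]
    _ = (Uᴴ * X * U).trace := trace_diagonal _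
    _ = X.trace := by rw [trace_mul_cycle, hUU', one_mul]

theorem dephase_mul_diagonal_mul (hU : U ∈ unitaryGroup n R) (d : n → R) :
    dephase U (U * diagonal d * Uᴴ) = U * diagonal d * Uᴴ := by
  have hUU : Uᴴ * U = 1 := Unitary.star_mul_self_of_mem hU
  have hdiag : Uᴴ * (U * diagonal d * Uᴴ) * U = diagonal d := by
    simp only [← mul_assoc, hUU, one_mul]
    rw [mul_assoc, hUU, mul_one]
  rw [dephase, hdiag, diag_diagonal]

theorem trace_measurePrepare (hU : U ∈ unitaryGroup n R) (X : Matrix n n R) :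
    (measurePrepare U X).trace = X.trace := by
  rw [← trace_partialTrace₂, partialTrace₂_measurePrepare hU, trace_dephase hU]

end MeasurePrepare

theorem choiMatrix_measurePrepare {n : ℕ} (U : Matrix (Fin n) (Fin n) ℂ) :
    choiMatrix (measurePrepare U) =
      (of fun x a => U x.1.1 a * U x.1.2 a * star (U x.2 a)) *
        (of fun x a => U x.1.1 a * U x.1.2 a * star (U x.2 a))ᴴ := by
  ext x y
  simp only [choiMatrix, of_apply, measurePrepare_apply, sum_apply, smul_apply, kroneckerMap_apply,
    mul_single_one_mul_apply, conjTranspose_apply, smul_eq_mul]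
  rw [mul_apply]
  simp only [of_apply, conjTranspose_apply, star_mul', star_star]
  exact sum_congr rfl fun a _ => by ring

theorem posSemidef_choiMatrix_measurePrepare {n : ℕ} (U : Matrix (Fin n) (Fin n) ℂ) :
    (choiMatrix (measurePrepare U)).PosSemidef := by
  rw [choiMatrix_measurePrepare]
  exact posSemidef_self_mul_conjTranspose _

end Matrix

theorem commuting_states_broadcastable_general {n : ℕ} {ι : Type*}
    (ρ : ι → Matrix (Fin n) (Fin n) ℂ)
    (hpos : ∀ k, (ρ k).PosSemidef)
    (hcomm : ∀ i j, ρ i * ρ j = ρ j * ρ i) :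
    ∃ Λ : Matrix (Fin n) (Fin n) ℂ →ₗ[ℂ] Matrix (Fin n × Fin n) (Fin n × Fin n) ℂ,
      (choiMatrix Λ).PosSemidef ∧
      (∀ X : Matrix (Fin n) (Fin n) ℂ, (Λ X).trace = X.trace) ∧
      (∀ k, Matrix.of (fun i j => ∑ b : Fin n, Λ (ρ k) (i, b) (j, b)) = ρ k) ∧
      (∀ k, Matrix.of (fun i j => ∑ a : Fin n, Λ (ρ k) (a, i) (a, j)) = ρ k) := by
  obtain ⟨U, hU, hdiag⟩ :=
    exists_unitary_forall_eq_diagonal_of_commute (fun k => (hpos k).isHermitian) hcomm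
  have hfixed : ∀ k, dephase U (ρ k) = ρ k := fun k => by
    obtain ⟨d, hd⟩ := hdiag k
    rw [hd, dephase_mul_diagonal_mul hU]
  exact ⟨measurePrepare U, posSemidef_choiMatrix_measurePrepare U, trace_measurePrepare hU,
    fun k => (partialTrace₂_measurePrepare hU (ρ k)).trans (hfixed k),
    fun k => (partialTrace₁_measurePrepare hU (ρ k)).trans (hfixed k)⟩

/-- A family of pairwise commuting density operators can be perfectly broadcast:
there is a completely positive (positive semidefinite Choi matrix) trace-preserving
map `Λ : B(H) → B(H ⊗ H)` both of whose marginals reproduce each `ρ k`. -/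
theorem commuting_states_broadcastable {n : ℕ} {ι : Type*}
    (ρ : ι → Matrix (Fin n) (Fin n) ℂ)
    (hpos : ∀ k, (ρ k).PosSemidef) (htr : ∀ k, (ρ k).trace = 1)
    (hcomm : ∀ i j, ρ i * ρ j = ρ j * ρ i) :
    ∃ Λ : Matrix (Fin n) (Fin n) ℂ →ₗ[ℂ] Matrix (Fin n × Fin n) (Fin n × Fin n) ℂ,
      (choiMatrix Λ).PosSemidef ∧
      (∀ X : Matrix (Fin n) (Fin n) ℂ, (Λ X).trace = X.trace) ∧
      (∀ k, Matrix.of (fun i j => ∑ b : Fin n, Λ (ρ k) (i, b) (j, b)) = ρ k) ∧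
      (∀ k, Matrix.of (fun i j => ∑ a : Fin n, Λ (ρ k) (a, i) (a, j)) = ρ k) :=
  commuting_states_broadcastable_general ρ hpos hcomm
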